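/- arXiv:1905.00463 — 2 statements merged into one kernel-verified Lean document; each statement's English description precedes it below -/
import Mathlib

section
/- Let ρ : Witt_> → Diff(ℂ((z))) be an injective Lie algebra homomorphism, where Witt_> is spanned by {L_i : i ≥ −1} with [L_i,L_j]=(i−j)L_{i+j}, and suppose ρ(L_0) has order 1. Then the sequence of orders n_i = ord(ρ(L_i)) satisfies either n_i = 1 for all i ≥ −1, or n_i = i+1 for all i ≥ −1; in particular n_i + n_j − 1 = n_{i+j} for all i ≠ j ≥ −1. -/
set_option synthInstance.maxHeartbeats 1000000
set_option maxHeartbeats 1000000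

noncomputable section

/-- The derivative `∂ = d/dz` on `ℂ((z))`, as a `ℂ`-linear endomorphism. -/
def Dz : Module.End ℂ (LaurentSeries ℂ) := LaurentSeries.derivative ℂ

/-- Multiplication by a Laurent series `g`, as a `ℂ`-linear endomorphism of `ℂ((z))`. -/
def mz (g : LaurentSeries ℂ) : Module.End ℂ (LaurentSeries ℂ) where
  toFun f := g * f
  map_add' := mul_add g
  map_smul' c f := by
    show g * (c • f) = c • (g * f)
    rw [← HahnSeries.single_zero_mul_eq_smul, ← HahnSeries.single_zero_mul_eq_smul, mul_left_comm]

/-- `P` is a differential operator on `ℂ((z))` of order `≤ k`: `P = Σ_{j=0}^{k} ξ_j ∂^j`. -/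
def DiffOrderLE (P : Module.End ℂ (LaurentSeries ℂ)) (k : ℕ) : Prop :=
  ∃ ξ : ℕ → LaurentSeries ℂ, P = ∑ j ∈ Finset.range (k + 1), mz (ξ j) * Dz ^ j

/-- `P` is a differential operator on `ℂ((z))` of order `< k` (for `k = 0` this means `P = 0`). -/
def DiffOrderLT (P : Module.End ℂ (LaurentSeries ℂ)) (k : ℕ) : Prop :=
  ∃ ξ : ℕ → LaurentSeries ℂ, P = ∑ j ∈ Finset.range k, mz (ξ j) * Dz ^ j

/-- `P` is a differential operator on `ℂ((z))` of order exactly `k`. -/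
def HasOrder (P : Module.End ℂ (LaurentSeries ℂ)) (k : ℕ) : Prop :=
  DiffOrderLE P k ∧ ¬ DiffOrderLT P k

/-!
Write `ρ i = ∑_{m ≤ n i} σ i m ∂^m` with `σ i (n i) ≠ 0`. The commutator of operators of orders
`p` and `q` has order `< p + q`, with `∂^{p+q-1}`-coefficient `p ξ_p ∂η_q - q η_q ∂ξ_p`. Since
`n 0 = 1`, comparing these coefficients in `⁅ρ 0, ρ i⁆ = -i ρ i` gives the first order equation
`θ ∂σ_i - n_i σ_i ∂θ = -i σ_i` for the top coefficients, `θ` being that of `ρ 0`. For `i ≠ j`,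
`⁅ρ i, ρ j⁆ = (i - j) ρ (i + j) ≠ 0` forces `n (i + j) < n i + n j`; if moreover
`n (i + j) + 1 < n i + n j`, the `∂^{n_i+n_j-1}`-coefficient `n_i σ_i ∂σ_j - n_j σ_j ∂σ_i`
vanishes, and multiplying by `θ` and using the two first order equations gives `n_i j = n_j i`.
For the pairs `(i + 1, -1)` the second alternative is impossible, so
`n (i + 1) = n i + 1 - n (-1)` for `i ≥ 0`; hence `n i = 1 + i (1 - n (-1))`, and `n 2 ≥ 0`
leaves only `n (-1) = 1` or `n (-1) = 0`.
-/

open Finset HahnSeries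

abbrev LS := LaurentSeries ℂ

theorem Dz_coeff (f : LS) (n : ℤ) : (Dz f).coeff n = (n + 1) • f.coeff (n + 1) := by
  simp [Dz, LaurentSeries.derivative_apply, LaurentSeries.hasseDeriv_coeff]

theorem coeff_single_one_mul_Dz (f : LS) (n : ℤ) :
    (single 1 1 * Dz f).coeff n = n • f.coeff n := by
  simpa [Dz_coeff] using coeff_single_mul_add (r := (1 : ℂ)) (x := Dz f) (a := n - 1) (b := 1)

-- `z ∂` acts on `z^n` by `n`, which makes its product rule a coefficientwise identity.
theorem Dz_mul (x y : LS) : Dz (x * y) = x * Dz y + Dz x * y := by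
  have hz : (single 1 1 : LS) ≠ 0 := by simp
  refine mul_left_cancel₀ hz ?_
  ext n
  have hy : (single 1 1 * Dz y).support ⊆ y.support := fun m hm => by
    simp_all [coeff_single_one_mul_Dz]
  have hx : (single 1 1 * Dz x).support ⊆ x.support := fun m hm => by
    simp_all [coeff_single_one_mul_Dz]
  rw [mul_add, mul_left_comm _ x, ← mul_assoc _ (Dz x), coeff_add, coeff_single_one_mul_Dz,
    coeff_mul, coeff_mul_right' y.isPWO_support hy, coeff_mul_left' x.isPWO_support hx,
    smul_sum, ← sum_add_distrib]
  refine sum_congr rfl fun ij hij => ?_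
  rw [coeff_single_one_mul_Dz, coeff_single_one_mul_Dz, mul_smul_comm, smul_mul_assoc, ← add_smul,
    (Finset.mem_antidiagonal.1 hij).2.2.symm, add_comm]

def mzHom : LS →+* Module.End ℂ LS where
  toFun := mz
  map_one' := LinearMap.ext one_mul
  map_mul' a b := LinearMap.ext (mul_assoc a b)
  map_zero' := LinearMap.ext zero_mul
  map_add' a b := LinearMap.ext (add_mul a b)

theorem mzHom_apply (g : LS) : mzHom g = mz g := rfl

theorem mz_apply (g f : LS) : mz g f = g * f := rfl

theorem mz_zero : mz 0 = 0 := map_zero mzHom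

theorem mz_smul (c : ℂ) (g : LS) : mz (c • g) = c • mz g :=
  LinearMap.ext fun f => by
    simp only [mz_apply, LinearMap.smul_apply, ← C_mul_eq_smul, mul_assoc]

theorem Dz_mul_mz (g : LS) : Dz * mz g = mz g * Dz + mz (Dz g) :=
  LinearMap.ext fun f => Dz_mul g f

def diffOp (N : ℕ) (ξ : ℕ → LS) : Module.End ℂ LS :=
  ∑ j ∈ range N, mz (ξ j) * Dz ^ j

theorem diffOp_sub (N : ℕ) (ξ η : ℕ → LS) : diffOp N (ξ - η) = diffOp N ξ - diffOp N η := by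
  -- `rw` with ring lemmas involving subtraction fails in `Module.End ℂ ℂ((z))`: the additive
  -- structures of `HahnSeries` agree only after unfolding, so the terms are given explicitly.
  have h j : mz ((ξ - η) j) * Dz ^ j = mz (ξ j) * Dz ^ j - mz (η j) * Dz ^ j :=
    (congrArg (· * Dz ^ j) (map_sub mzHom (ξ j) (η j))).trans
      (sub_mul (mzHom (ξ j)) (mzHom (η j)) (Dz ^ j))
  exact (sum_congr rfl fun j _ => h j).trans
    (sum_sub_distrib (fun j => mz (ξ j) * Dz ^ j) (fun j => mz (η j) * Dz ^ j))

theorem diffOp_smul (N : ℕ) (c : ℂ) (ξ : ℕ → LS) : diffOp N (c • ξ) = c • diffOp N ξ := by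
  simp only [diffOp, smul_sum, Pi.smul_apply, mz_smul, smul_mul_assoc]

theorem diffOp_sum {ι : Type*} (s : Finset ι) (N : ℕ) (ξ : ι → ℕ → LS) :
    diffOp N (∑ i ∈ s, ξ i) = ∑ i ∈ s, diffOp N (ξ i) := by
  simp only [diffOp, Finset.sum_apply, ← mzHom_apply, map_sum, sum_mul]
  exact sum_comm

theorem diffOp_eq_ite_of_le {N M : ℕ} (h : N ≤ M) (ξ : ℕ → LS) :
    diffOp N ξ = diffOp M fun j => if j < N then ξ j else 0 := by
  refine (sum_congr rfl fun j hj => by simp only [if_pos (mem_range.1 hj)]).trans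
    (sum_subset (range_subset_range.2 h) fun j _ hj => ?_)
  simp only [if_neg (mt mem_range.2 hj), mz_zero, zero_mul]

theorem Dz_single (m : ℕ) : Dz (single (m : ℤ) (1 : ℂ)) = m • single ((m - 1 : ℕ) : ℤ) 1 := by
  ext n
  rw [Dz_coeff, coeff_nsmul, Pi.smul_apply, coeff_single, coeff_single]
  rcases Nat.eq_zero_or_pos m with rfl | hm
  · split_ifs <;> simp_all
  · split_ifs <;> first | omega | simp_all

theorem Dz_pow_single (t j : ℕ) :
    (Dz ^ t) (single (j : ℤ) (1 : ℂ)) = j.descFactorial t • single ((j - t : ℕ) : ℤ) 1 := by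
  induction t with
  | zero => simp
  | succ t ih =>
    rw [pow_succ', Module.End.mul_apply, ih, map_nsmul, Dz_single, smul_smul,
      Nat.descFactorial_succ, mul_comm, Nat.sub_sub]

theorem coeff_eq_zero_of_diffOp_eq_zero {N : ℕ} {ξ : ℕ → LS} (h : diffOp N ξ = 0) :
    ∀ j < N, ξ j = 0 := by
  intro j
  induction j using Nat.strong_induction_on with
  | _ j ih =>
    intro hj
    have hX := LinearMap.congr_fun h (single (j : ℤ) 1)
    rw [diffOp, LinearMap.sum_apply, LinearMap.zero_apply,
      sum_eq_single_of_mem j (mem_range.2 hj)] at hX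
    · simp only [Module.End.mul_apply, mz_apply, Dz_pow_single, Nat.descFactorial_self,
        Nat.sub_self, Nat.cast_zero, single_zero_one, ← Nat.cast_smul_eq_nsmul ℂ,
        ← C_mul_eq_smul, mul_one] at hX
      exact (mul_eq_zero.1 hX).resolve_right (C_ne_zero (Nat.cast_ne_zero.2 j.factorial_ne_zero))
    · intro t ht htj
      rcases lt_or_gt_of_ne htj with htj | htj
      · simp [ih t htj (by omega), mz_apply]
      · simp [Dz_pow_single, Nat.descFactorial_eq_zero_iff_lt.2 htj, mz_apply]

theorem diffOp_succ (N : ℕ) (ξ : ℕ → LS) : diffOp (N + 1) ξ = diffOp N ξ + mz (ξ N) * Dz ^ N :=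
  sum_range_succ _ _

theorem diffOp_succ_of_eq_zero {N : ℕ} {ξ : ℕ → LS} (h : ξ N = 0) :
    diffOp (N + 1) ξ = diffOp N ξ := by
  rw [diffOp_succ, h, mz_zero, zero_mul, add_zero]

theorem ite_eq_of_diffOp_eq {N M : ℕ} {ξ η : ℕ → LS} (h : diffOp N ξ = diffOp M η) (j : ℕ) :
    (if j < N then ξ j else 0) = if j < M then η j else 0 := by
  by_cases hj : j < max N M
  · refine sub_eq_zero.1 (coeff_eq_zero_of_diffOp_eq_zero (N := max N M)
      (ξ := (fun j => if j < N then ξ j else 0) - fun j => if j < M then η j else 0) ?_ j hj)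
    rw [diffOp_sub, ← diffOp_eq_ite_of_le (le_max_left N M),
      ← diffOp_eq_ite_of_le (le_max_right N M)]
    exact sub_eq_zero_of_eq h
  · simp [show ¬ j < N by omega, show ¬ j < M by omega]

theorem lt_of_diffOp_eq {N M j : ℕ} {ξ η : ℕ → LS} (h : diffOp N ξ = diffOp M η) (hj : j < M)
    (hη : η j ≠ 0) : j < N := by
  by_contra hN
  simpa [hN, hj, eq_comm, hη] using ite_eq_of_diffOp_eq h j

theorem hasOrder_iff {P : Module.End ℂ LS} {N : ℕ} :
    HasOrder P N ↔ ∃ σ, P = diffOp (N + 1) σ ∧ σ N ≠ 0 := by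
  refine ⟨fun ⟨⟨σ, hσ⟩, hlt⟩ => ⟨σ, hσ, fun h => hlt ⟨σ, ?_⟩⟩, fun ⟨σ, hσ, hN⟩ => ⟨⟨σ, hσ⟩, ?_⟩⟩
  · exact hσ.trans (diffOp_succ_of_eq_zero h)
  · rintro ⟨τ, hτ⟩
    exact lt_irrefl N (lt_of_diffOp_eq (hτ.symm.trans hσ) N.lt_succ_self hN)

theorem HasOrder.unique {P : Module.End ℂ LS} {N M : ℕ} (hN : HasOrder P N) (hM : HasOrder P M) :
    N = M := by
  obtain ⟨σ, hσ, hσN⟩ := hasOrder_iff.1 hN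
  obtain ⟨τ, hτ, hτM⟩ := hasOrder_iff.1 hM
  have h₁ := lt_of_diffOp_eq (hσ.symm.trans hτ) M.lt_succ_self hτM
  have h₂ := lt_of_diffOp_eq (hτ.symm.trans hσ) N.lt_succ_self hσN
  omega

theorem exists_hasOrder {P : Module.End ℂ LS} (hP : P ≠ 0) (h : ∃ k, DiffOrderLE P k) :
    ∃ N, HasOrder P N := by
  classical
  refine ⟨Nat.find h, Nat.find_spec h, fun hlt => ?_⟩
  rcases hN : Nat.find h with _ | N
  · obtain ⟨ξ, hξ⟩ := hN ▸ hlt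
    exact hP hξ
  · exact Nat.find_min h (hN ▸ N.lt_succ_self) (hN ▸ hlt)

theorem Dz_mul_mz_mul_Dz_pow (g : LS) (m : ℕ) :
    Dz * (mz g * Dz ^ m) = mz g * Dz ^ (m + 1) + mz (Dz g) * Dz ^ m := by
  rw [← mul_assoc, Dz_mul_mz, add_mul, mul_assoc, ← pow_succ']

theorem Dz_pow_mul_mz (a : ℕ) (η : LS) :
    Dz ^ a * mz η = diffOp (a + 1) fun m => a.choose m • (Dz ^ (a - m)) η := by
  simp only [diffOp, ← mzHom_apply, map_nsmul, smul_mul_assoc]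
  induction a with
  | zero => simp
  | succ a ih =>
    rw [pow_succ', mul_assoc, ih, mul_sum,
      sum_choose_succ_nsmul (fun m k => mzHom ((Dz ^ k) η) * Dz ^ m), ← sum_add_distrib]
    refine sum_congr rfl fun m hm => ?_
    rw [mul_smul_comm, mzHom_apply, mzHom_apply, Dz_mul_mz_mul_Dz_pow, smul_add, add_comm,
      ← Module.End.mul_apply, ← pow_succ', Nat.sub_add_comm (Nat.lt_succ_iff.1 (mem_range.1 hm))]

theorem mz_mul_diffOp (ξ : LS) (N : ℕ) (η : ℕ → LS) :
    mz ξ * diffOp N η = diffOp N fun j => ξ * η j := by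
  simp only [diffOp, mul_sum, ← mul_assoc, ← mzHom_apply, map_mul]

theorem diffOp_mul_Dz_pow (N b : ℕ) (ξ : ℕ → LS) :
    diffOp N ξ * Dz ^ b = diffOp (b + N) fun n => if b ≤ n then ξ (n - b) else 0 := by
  rw [diffOp, diffOp, sum_range_add _ b N, sum_eq_zero (s := range b) fun n hn => ?_, zero_add,
    sum_mul]
  · simp [mul_assoc, ← _root_.pow_add, add_comm b]
  · simp [(mem_range.1 hn).not_ge, mz_zero]

theorem monomial_mul_monomial (ξ η : LS) (a b : ℕ) : ∃ ζ : ℕ → LS,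
    mz ξ * Dz ^ a * (mz η * Dz ^ b) = diffOp (a + b + 1) ζ ∧ (∀ n, a + b < n → ζ n = 0) ∧
      ζ (a + b) = ξ * η ∧ ∀ n, n + 1 = a + b → ζ n = a • (ξ * Dz η) := by
  refine ⟨fun n => if b ≤ n then ξ * (a.choose (n - b) • (Dz ^ (a - (n - b))) η) else 0,
    ?_, fun n hn => ?_, ?_, fun n hn => ?_⟩
  · rw [mul_assoc, ← mul_assoc _ (mz η), Dz_pow_mul_mz, ← mul_assoc, mz_mul_diffOp,
      diffOp_mul_Dz_pow, add_right_comm, add_comm b]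
  · simp [Nat.choose_eq_zero_of_lt (show a < n - b by omega)]
  · simp
  · rcases Nat.eq_zero_or_pos a with rfl | ha
    · simp [show ¬ b ≤ n by omega]
    · obtain ⟨a, rfl⟩ := Nat.exists_eq_add_of_lt ha
      simp [show b ≤ n by omega, show n - b = a by omega, Nat.choose_succ_self_right]
      ring

theorem lie_monomial (ξ η : LS) (a b : ℕ) : ∃ ζ : ℕ → LS,
    ⁅mz ξ * Dz ^ a, mz η * Dz ^ b⁆ = diffOp (a + b) ζ ∧ (∀ n, a + b ≤ n → ζ n = 0) ∧
      ∀ n, n + 1 = a + b → ζ n = a • (ξ * Dz η) - b • (η * Dz ξ) := by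
  obtain ⟨α, hα, hα₀, hα₁, hα₂⟩ := monomial_mul_monomial ξ η a b
  obtain ⟨β, hβ, hβ₀, hβ₁, hβ₂⟩ := monomial_mul_monomial η ξ b a
  rw [add_comm b a] at hβ hβ₀ hβ₁ hβ₂
  have htop : (α - β) (a + b) = 0 := by simp [hα₁, hβ₁, mul_comm]
  refine ⟨α - β, ?_, fun n hn => ?_, fun n hn => by simp [hα₂ n hn, hβ₂ n hn]⟩
  · rw [LieRing.of_associative_ring_bracket, hα, hβ, ← diffOp_succ_of_eq_zero htop]
    exact (diffOp_sub _ α β).symm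
  · rcases hn.lt_or_eq with hn | rfl
    · simp [hα₀ n hn, hβ₀ n hn]
    · exact htop

theorem diffOp_eq_of_forall_ge {N M : ℕ} {ξ : ℕ → LS} (hξ : ∀ n, N ≤ n → ξ n = 0) (h : N ≤ M) :
    diffOp M ξ = diffOp N ξ :=
  (sum_subset (range_subset_range.2 h) fun j _ hj => by
    rw [hξ j (not_lt.1 (mt mem_range.2 hj)), mz_zero, zero_mul]).symm

theorem lie_diffOp (p q : ℕ) (ξ η : ℕ → LS) : ∃ ζ : ℕ → LS,
    ⁅diffOp (p + 1) ξ, diffOp (q + 1) η⁆ = diffOp (p + q) ζ ∧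
      ∀ n, n + 1 = p + q → ζ n = p • (ξ p * Dz (η q)) - q • (η q * Dz (ξ p)) := by
  choose Z hZ hZ₀ hZ₁ using fun j k => lie_monomial (ξ j) (η k) j k
  refine ⟨∑ j ∈ range (p + 1), ∑ k ∈ range (q + 1), Z j k, ?_, fun n hn => ?_⟩
  · -- `LieRing.ofAssociativeRing` is not a global instance.
    let _ : LieRing (Module.End ℂ LS) := LieRing.ofAssociativeRing
    refine (sum_lie_sum (range (p + 1)) (range (q + 1)) (fun j => mz (ξ j) * Dz ^ j)
      (fun k => mz (η k) * Dz ^ k)).trans ?_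
    simp only [hZ, diffOp_sum]
    refine sum_congr rfl fun j hj => sum_congr rfl fun k hk => ?_
    exact (diffOp_eq_of_forall_ge (hZ₀ j k) (by simp at hj hk; omega)).symm
  · simp only [Finset.sum_apply]
    rw [sum_eq_single p, sum_eq_single q, hZ₁ p q n hn]
    · exact fun k hk hkq => hZ₀ p k n (by simp at hk; omega)
    · simp
    · exact fun j hj hjp => sum_eq_zero fun k hk => hZ₀ j k n (by simp at hj hk; omega)
    · simp

section LieEqSmul

variable {p q r : ℕ} {ξ η ζ : ℕ → LS} {c : ℂ}
  (h : ⁅diffOp (p + 1) ξ, diffOp (q + 1) η⁆ = c • diffOp (r + 1) ζ)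
include h

theorem lt_of_lie_eq_smul (hζ : c • ζ r ≠ 0) : r < p + q := by
  obtain ⟨Z, hZ, -⟩ := lie_diffOp p q ξ η
  exact lt_of_diffOp_eq (hZ.symm.trans (h.trans (diffOp_smul _ c ζ).symm)) r.lt_succ_self hζ

theorem coeff_of_lie_eq_smul {n : ℕ} (hn : n + 1 = p + q) :
    (if n ≤ r then c • ζ n else 0) = p • (ξ p * Dz (η q)) - q • (η q * Dz (ξ p)) := by
  obtain ⟨Z, hZ, hZ₁⟩ := lie_diffOp p q ξ η
  have := ite_eq_of_diffOp_eq (hZ.symm.trans (h.trans (diffOp_smul _ c ζ).symm)) n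
  simpa [show n < p + q by omega, Nat.lt_succ_iff, hZ₁ n hn, eq_comm] using this

end LieEqSmul

theorem mul_eq_mul_of_wronskian {θ x y : LS} {a b : ℕ} {c d : ℂ}
    (hx : c • x = θ * Dz x - a • (x * Dz θ)) (hy : d • y = θ * Dz y - b • (y * Dz θ))
    (hxy : a • (x * Dz y) - b • (y * Dz x) = 0) (hx₀ : x ≠ 0) (hy₀ : y ≠ 0) :
    (a : ℂ) * d = b * c := by
  have key : C ((a : ℂ) * d - b * c) * (x * y) = 0 := by
    simp only [← C_mul_eq_smul, nsmul_eq_mul] at hx hy hxy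
    rw [map_sub, map_mul, map_mul, map_natCast, map_natCast]
    linear_combination a * x * hy - b * y * hx + θ * hxy
  rw [mul_eq_zero, or_iff_left (mul_ne_zero hx₀ hy₀), ← C_zero, C_injective.eq_iff] at key
  exact sub_eq_zero.1 key

theorem orders_dichotomy (n : ℤ → ℕ) (h0 : n 0 = 1)
    (hpair : ∀ i j : ℤ, -1 ≤ i → -1 ≤ j → i ≠ j → (n (i + j) : ℤ) + 1 ≤ n i + n j ∧
      ((n (i + j) : ℤ) + 1 = n i + n j ∨ (n i : ℤ) * j = n j * i)) :
    (∀ i : ℤ, -1 ≤ i → n i = 1) ∨ (∀ i : ℤ, -1 ≤ i → (n i : ℤ) = i + 1) := by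
  have step (i : ℤ) (hi : 0 ≤ i) : (n (i + 1) : ℤ) = n i + 1 - n (-1) := by
    obtain ⟨hle, heq | hmul⟩ := hpair (i + 1) (-1) (by omega) le_rfl (by omega)
    · rw [show i + 1 + -1 = i by ring] at heq
      omega
    · rw [show i + 1 + -1 = i by ring] at hle
      nlinarith
  have closed : ∀ i : ℤ, 0 ≤ i → (n i : ℤ) = 1 + i * (1 - n (-1)) :=
    Int.leInduction (by simp [h0]) fun i hi ih => by rw [step i hi, ih]; ring
  have hb : n (-1) ≤ 1 := by
    have := closed 2 (by norm_num)
    omega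
  interval_cases hb' : n (-1)
  · refine Or.inr fun i hi => ?_
    rcases (show i = -1 ∨ 0 ≤ i by omega) with rfl | hi
    · simp [hb']
    · linear_combination closed i hi
  · refine Or.inl fun i hi => ?_
    rcases (show i = -1 ∨ 0 ≤ i by omega) with rfl | hi
    · exact hb'
    · simpa using closed i hi

section WittRepresentation

variable {ρ : ℤ → Module.End ℂ LS} {n : ℤ → ℕ} {σ : ℤ → ℕ → LS}
  (hrel : ∀ i j : ℤ, -1 ≤ i → -1 ≤ j → ⁅ρ i, ρ j⁆ = ((i : ℂ) - (j : ℂ)) • ρ (i + j))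
  (hσ : ∀ i : ℤ, -1 ≤ i → ρ i = diffOp (n i + 1) (σ i)) (hn0 : n 0 = 1)
include hrel hσ hn0

theorem top_coeff_eq_of_lie_zero {i : ℤ} (hi : -1 ≤ i) :
    -(i : ℂ) • σ i (n i) = σ 0 1 * Dz (σ i (n i)) - n i • (σ i (n i) * Dz (σ 0 1)) := by
  have h := hrel 0 i (by norm_num) hi
  rw [zero_add, hσ 0 (by norm_num), hσ i hi, hn0] at h
  simpa using coeff_of_lie_eq_smul h (n := n i) (by omega)

theorem orders_add_of_ne (hσn : ∀ i : ℤ, -1 ≤ i → σ i (n i) ≠ 0) {i j : ℤ} (hi : -1 ≤ i)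
    (hj : -1 ≤ j) (hij : i ≠ j) :
    (n (i + j) : ℤ) + 1 ≤ n i + n j ∧
      ((n (i + j) : ℤ) + 1 = n i + n j ∨ (n i : ℤ) * j = n j * i) := by
  have h := hrel i j hi hj
  rw [hσ i hi, hσ j hj, hσ (i + j) (by omega)] at h
  have hc : (i : ℂ) - j ≠ 0 := sub_ne_zero.2 (by exact_mod_cast hij)
  have hlt := lt_of_lie_eq_smul h (smul_ne_zero hc (hσn (i + j) (by omega)))
  refine ⟨by omega, or_iff_not_imp_left.2 fun hlt' => ?_⟩
  have hcoeff := coeff_of_lie_eq_smul h (n := n i + n j - 1) (by omega)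
  rw [if_neg (by omega)] at hcoeff
  have := mul_eq_mul_of_wronskian (top_coeff_eq_of_lie_zero hrel hσ hn0 hi)
    (top_coeff_eq_of_lie_zero hrel hσ hn0 hj) hcoeff.symm (hσn i hi) (hσn j hj)
  exact_mod_cast (show ((n i * j : ℤ) : ℂ) = ((n j * i : ℤ) : ℂ) by
    push_cast; linear_combination -this)

end WittRepresentation

/-- Let `ρ : Witt_> → Diff(ℂ((z)))` be an injective Lie algebra homomorphism
(`Witt_>` is spanned by `{L i : i ≥ −1}` with `[L i, L j] = (i−j) L (i+j)`), and suppose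
`ρ(L 0)` has order `1`.  Then the orders `n i = ord(ρ(L i))` satisfy either `n i = 1` for all
`i ≥ −1` or `n i = i + 1` for all `i ≥ −1`; in particular `n i + n j − 1 = n (i+j)` for all
distinct `i, j ≥ −1`. -/
theorem orders_of_witt_gt_representation
    (ρ : ℤ → Module.End ℂ (LaurentSeries ℂ))
    (hdiff : ∀ i : ℤ, -1 ≤ i → ∃ k : ℕ, DiffOrderLE (ρ i) k)
    (hrel : ∀ i j : ℤ, -1 ≤ i → -1 ≤ j →
      ⁅ρ i, ρ j⁆ = (((i : ℂ) - (j : ℂ))) • ρ (i + j))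
    (hinj : ∀ c : ℤ →₀ ℂ, (∀ i ∈ c.support, (-1 : ℤ) ≤ i) →
      (c.sum fun i a => a • ρ i) = 0 → c = 0)
    (h0 : HasOrder (ρ 0) 1) :
    ∃ n : ℤ → ℕ,
      (∀ i : ℤ, -1 ≤ i → HasOrder (ρ i) (n i)) ∧
      ((∀ i : ℤ, -1 ≤ i → n i = 1) ∨ (∀ i : ℤ, -1 ≤ i → (n i : ℤ) = i + 1)) ∧
      (∀ i j : ℤ, -1 ≤ i → -1 ≤ j → i ≠ j →
        (n i : ℤ) + (n j : ℤ) - 1 = (n (i + j) : ℤ)) := by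
  have hne (i : ℤ) (hi : -1 ≤ i) : ρ i ≠ 0 := fun hρ => by
    simpa using hinj (Finsupp.single i 1) (by simpa using hi) (by simp [hρ])
  choose! n σ hσ hσn using fun i hi => (exists_hasOrder (hne i hi) (hdiff i hi)).imp
    fun _ => hasOrder_iff.1
  have hord (i : ℤ) (hi : -1 ≤ i) : HasOrder (ρ i) (n i) := hasOrder_iff.2 ⟨σ i, hσ i hi, hσn i hi⟩
  have hn0 : n 0 = 1 := (hord 0 (by norm_num)).unique h0
  have hdich := orders_dichotomy n hn0 fun i j => orders_add_of_ne hrel hσ hn0 hσn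
  refine ⟨n, hord, hdich, fun i j hi hj _ => ?_⟩
  rcases hdich with h | h
  · simp [h i hi, h j hj, h (i + j) (by omega)]
  · rw [h i hi, h j hj, h (i + j) (by omega)]
    ring
end
end

section
/- For a ∈ ℂ* and c ∈ ℂ, the operators ρ(L_{−1}) = (a+z) (multiplication), ρ(L_0) = (a+z)∂, ρ(L_1) = (a+z)∂² − c(c+1)(a+z)^{−1} on ℂ[[z]] define a representation of sl(2): [ρ(L_0),ρ(L_{−1})] = ρ(L_{−1}), [ρ(L_0),ρ(L_1)] = −ρ(L_1), [ρ(L_1),ρ(L_{−1})] = 2ρ(L_0). -/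
/-! If `⁅d, x⁆ = 1` and `x` is invertible with inverse `y`, then `x`, `x d` and `x d² − k y`
satisfy the `sl(2)` relations for every scalar `k`: the term `x d²` alone gives the
representation with `k = 0`, and `y` is an extra lowering direction for `x d` that commutes
with `x`. On `ℂ[[z]]` this applies to `x = a + z` and `d = ∂`, since `∂(a + z) = 1` and
`a + z` is a unit as soon as `a ≠ 0`. -/

set_option synthInstance.maxHeartbeats 1000000
set_option maxHeartbeats 1000000

noncomputable section

/-- The derivative `∂ = d/dz` on `ℂ[[z]]`, as a `ℂ`-linear endomorphism. -/
def Dp : Module.End ℂ (PowerSeries ℂ) := (PowerSeries.derivative ℂ).toLinearMap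

/-- Multiplication by a power series `g`, as a `ℂ`-linear endomorphism of `ℂ[[z]]`. -/
def mp (g : PowerSeries ℂ) : Module.End ℂ (PowerSeries ℂ) := LinearMap.mulLeft ℂ g

section WeylRelation

attribute [local instance] LieRing.ofAssociativeRing

variable {K A : Type*} [CommRing K] [Ring A] [Algebra K A] {d x y : A}

theorem lie_mul_left_self (x a : A) : ⁅x * a, x⁆ = x * ⁅a, x⁆ := by
  simp only [Ring.lie_def]
  noncomm_ring

theorem lie_sq_of_lie_eq_one (hdx : ⁅d, x⁆ = 1) : ⁅d ^ 2, x⁆ = 2 * d := by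
  have expand : ⁅d ^ 2, x⁆ = d * ⁅d, x⁆ + ⁅d, x⁆ * d := by
    simp only [Ring.lie_def]
    noncomm_ring
  rw [expand, hdx, mul_one, one_mul, two_mul]

theorem lie_inverse_eq_neg_sq_of_lie_eq_one (hdx : ⁅d, x⁆ = 1) (hxy : x * y = 1)
    (hyx : y * x = 1) : ⁅d, y⁆ = -y ^ 2 := by
  have conj : ⁅d, y⁆ = -(y * ⁅d, x⁆ * y) := by
    simp only [Ring.lie_def, mul_sub, sub_mul, mul_assoc, hxy, ← mul_assoc y x, hyx]
    noncomm_ring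
  rw [conj, hdx, mul_one, sq]

theorem lie_mul_inverse_eq_neg_of_lie_eq_one (hdx : ⁅d, x⁆ = 1) (hxy : x * y = 1)
    (hyx : y * x = 1) : ⁅x * d, y⁆ = -y := by
  have expand : ⁅x * d, y⁆ = x * ⁅d, y⁆ + (x * y - y * x) * d := by
    simp only [Ring.lie_def]
    noncomm_ring
  rw [expand, hxy, hyx, sub_self, zero_mul, add_zero,
    lie_inverse_eq_neg_sq_of_lie_eq_one hdx hxy hyx, sq, mul_neg, ← mul_assoc, hxy, one_mul]

theorem lie_mul_sq_of_lie_eq_one (hdx : ⁅d, x⁆ = 1) : ⁅x * d, x * d ^ 2⁆ = -(x * d ^ 2) := by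
  have expand : ⁅x * d, x * d ^ 2⁆ = x * ⁅d, x⁆ * d ^ 2 - x * ⁅d ^ 2, x⁆ * d := by
    simp only [Ring.lie_def]
    noncomm_ring
  rw [expand, lie_sq_of_lie_eq_one hdx, hdx]
  noncomm_ring

theorem sl2_lie_L0_Lm1 (hdx : ⁅d, x⁆ = 1) : ⁅x * d, x⁆ = x := by
  rw [lie_mul_left_self, hdx, mul_one]

theorem sl2_lie_L0_L1 (hdx : ⁅d, x⁆ = 1) (hxy : x * y = 1) (hyx : y * x = 1) (k : K) :
    ⁅x * d, x * d ^ 2 - k • y⁆ = -(x * d ^ 2 - k • y) := by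
  rw [lie_sub, lie_smul (R := K), lie_mul_sq_of_lie_eq_one hdx,
    lie_mul_inverse_eq_neg_of_lie_eq_one hdx hxy hyx, smul_neg]
  abel

theorem sl2_lie_L1_Lm1 (hdx : ⁅d, x⁆ = 1) (hxy : x * y = 1) (hyx : y * x = 1) (k : K) :
    ⁅x * d ^ 2 - k • y, x⁆ = (2 : K) • (x * d) := by
  have hyx_comm : ⁅y, x⁆ = 0 := by rw [Ring.lie_def, hyx, hxy, sub_self]
  rw [sub_lie, smul_lie (R := K), hyx_comm, smul_zero, sub_zero, lie_mul_left_self,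
    lie_sq_of_lie_eq_one hdx, two_smul, two_mul, mul_add]

end WeylRelation

theorem mp_mul (g h : PowerSeries ℂ) : mp (g * h) = mp g * mp h :=
  map_mul (Algebra.lmul ℂ (PowerSeries ℂ)) g h

theorem mp_one : mp 1 = 1 :=
  map_one (Algebra.lmul ℂ (PowerSeries ℂ))

theorem lie_Dp_mp (g : PowerSeries ℂ) : ⁅Dp, mp g⁆ = mp (PowerSeries.derivative ℂ g) := by
  ext f
  simp [Ring.lie_def, Dp, mp, mul_comm]

/-- For `a ∈ ℂ*` and `c ∈ ℂ`, the operators `ρ(L₋₁) = (a+z)` (multiplication),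
`ρ(L₀) = (a+z)∂`, `ρ(L₁) = (a+z)∂² − c(c+1)(a+z)⁻¹` on `ℂ[[z]]` define a representation of
`sl(2)`: `[ρL₀, ρL₋₁] = ρL₋₁`, `[ρL₀, ρL₁] = −ρL₁`, `[ρL₁, ρL₋₁] = 2ρL₀`. -/
theorem sl2_rep_on_power_series_S0_case3 (a c : ℂ) (ha : a ≠ 0)
    (ρm1 ρ0 ρ1 : Module.End ℂ (PowerSeries ℂ))
    (hm1 : ρm1 = mp (PowerSeries.C a + PowerSeries.X))
    (h0 : ρ0 = mp (PowerSeries.C a + PowerSeries.X) * Dp)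
    (h1 : ρ1 = mp (PowerSeries.C a + PowerSeries.X) * Dp ^ 2 -
      (c * (c + 1)) • mp ((PowerSeries.C a + PowerSeries.X)⁻¹)) :
    ⁅ρ0, ρm1⁆ = ρm1 ∧ ⁅ρ0, ρ1⁆ = -ρ1 ∧ ⁅ρ1, ρm1⁆ = (2 : ℂ) • ρ0 := by
  set u : PowerSeries ℂ := PowerSeries.C a + PowerSeries.X
  have hu : PowerSeries.constantCoeff u ≠ 0 := by simpa [u] using ha
  have hweyl : ⁅Dp, mp u⁆ = 1 := by simp [lie_Dp_mp, u, mp_one]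
  have hright : mp u * mp u⁻¹ = 1 := by rw [← mp_mul, PowerSeries.mul_inv_cancel u hu, mp_one]
  have hleft : mp u⁻¹ * mp u = 1 := by rw [← mp_mul, PowerSeries.inv_mul_cancel u hu, mp_one]
  subst hm1 h0 h1
  exact ⟨sl2_lie_L0_Lm1 hweyl, sl2_lie_L0_L1 hweyl hright hleft _,
    sl2_lie_L1_Lm1 hweyl hright hleft _⟩
end
end
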